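/- Pullback through a multiplication node, left argument (Theorem 4, second part): let s1, s2 be index sets, s3 ⊆ s1 ∪ s2, and let s4 be an index set disjoint from s1 ∪ s2. Let B be a fixed tensor with index set s2, and let Y be a function from tensors with index set s3 to tensors with index set s4 that has derivative tensor C̄ (index set s4s3) at the point C = A *_{(s1, s2, s3)} B. Then the function A ↦ Y(A *_{(s1, s2, s3)} B) has derivative tensor C̄ *_{(s4s3, s2, s4s1)} B at A. -/

import Mathlib

open Filter

/-- A function `A` on full index assignments is a *tensor with index set `s`* if it only
depends on the values of the indices in `s`. -/
def TensorDependsOn {ι : Type*} (d : ι → ℕ) (s : Finset ι) (A : (∀ i, Fin (d i)) → ℝ) : Prop :=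
  ∀ a b : ∀ i, Fin (d i), (∀ i ∈ s, a i = b i) → A a = A b

/-- Generic tensor multiplication `A *_{(s1,s2,s3)} B`: the entry of the result at an
assignment `a` is the sum over all assignments of the indices in `(s1 ∪ s2) \ s3` of the
product of the corresponding entries of `A` and `B`. -/
noncomputable def tmul {ι : Type*} [Fintype ι] [DecidableEq ι] (d : ι → ℕ)
    (s1 s2 s3 : Finset ι) (A B : (∀ i, Fin (d i)) → ℝ) : (∀ i, Fin (d i)) → ℝ :=
  fun a => ∑ b : ∀ i, Fin (d i),
    if (∀ i, i ∉ (s1 ∪ s2) \ s3 → b i = a i) then A b * B b else 0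

/-- The Euclidean/Frobenius norm `√(∑_s A[s]²)` of a tensor with index set `s`:
the sum ranges over the assignments of the indices in `s` (indices outside `s` are
pinned to the value `0`). -/
noncomputable def tnorm {ι : Type*} [Fintype ι] [DecidableEq ι] (d : ι → ℕ)
    [∀ i, NeZero (d i)] (s : Finset ι) (A : (∀ i, Fin (d i)) → ℝ) : ℝ :=
  Real.sqrt (∑ a : ∀ i, Fin (d i), if (∀ i, i ∉ s → a i = 0) then A a ^ 2 else 0)

/-- Fréchet derivative (Definition 1): a function `f` from tensors with index set `sx` to
tensors with index set `sy` has derivative tensor `D` (with index set `sy ∪ sx`) at `x` if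
`‖f(x+h) − f(x) − D ∘ h‖ / ‖h‖ → 0` as the tensor `h` (with index set `sx`) tends to `0`,
where `D ∘ h = D *_{(sy sx, sx, sy)} h`. -/
noncomputable def HasDerivTensor {ι : Type*} [Fintype ι] [DecidableEq ι] (d : ι → ℕ)
    [∀ i, NeZero (d i)] (sx sy : Finset ι)
    (f : ((∀ i, Fin (d i)) → ℝ) → ((∀ i, Fin (d i)) → ℝ))
    (x D : (∀ i, Fin (d i)) → ℝ) : Prop :=
  Tendsto
    (fun h => tnorm d sy (f (x + h) - f x - tmul d (sy ∪ sx) sx sy D h) / tnorm d sx h)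
    (nhdsWithin 0 {h | TensorDependsOn d sx h ∧ h ≠ 0}) (nhds 0)

section Aux
variable {ι : Type*} [Fintype ι] [DecidableEq ι] {d : ι → ℕ} [∀ i, NeZero (d i)]

lemma tnorm_nonneg (s : Finset ι) (A : (∀ i, Fin (d i)) → ℝ) : 0 ≤ tnorm d s A :=
  Real.sqrt_nonneg _

lemma abs_le_tnorm {s : Finset ι} {A : (∀ i, Fin (d i)) → ℝ} (hA : TensorDependsOn d s A)
    (x : ∀ i, Fin (d i)) : |A x| ≤ tnorm d s A := by
  set x' : ∀ i, Fin (d i) := fun i => if i ∈ s then x i else 0 with hx'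
  have hAx : A x = A x' := hA x x' (fun i hi => by simp [hx', hi])
  have hx'0 : ∀ i, i ∉ s → x' i = 0 := fun i hi => by simp [hx', hi]
  have h1 : (A x') ^ 2 ≤ ∑ a : ∀ i, Fin (d i), if (∀ i, i ∉ s → a i = 0) then A a ^ 2 else 0 := by
    have := Finset.single_le_sum (f := fun a : ∀ i, Fin (d i) =>
      if (∀ i, i ∉ s → a i = 0) then A a ^ 2 else 0)
      (fun a _ => by positivity) (Finset.mem_univ x')
    rwa [if_pos hx'0] at this
  rw [hAx, tnorm, ← Real.sqrt_sq_eq_abs (A x')]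
  exact Real.sqrt_le_sqrt h1

lemma dist_le_tnorm {s : Finset ι} {A : (∀ i, Fin (d i)) → ℝ} (hA : TensorDependsOn d s A) :
    dist A 0 ≤ tnorm d s A := by
  rw [dist_pi_le_iff (tnorm_nonneg s A)]
  intro x
  simpa [Real.dist_eq] using abs_le_tnorm hA x

lemma tnorm_le_sqrt_card_mul (s : Finset ι) (A : (∀ i, Fin (d i)) → ℝ) :
    tnorm d s A ≤ Real.sqrt (Fintype.card (∀ i, Fin (d i))) * dist A 0 := by
  have h1 : ∀ a : ∀ i, Fin (d i),
      (if (∀ i, i ∉ s → a i = 0) then A a ^ 2 else 0) ≤ dist A 0 ^ 2 := by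
    intro a
    have : |A a| ≤ dist A 0 := by
      simpa [Real.dist_eq] using dist_le_pi_dist A 0 a
    have h2 : A a ^ 2 ≤ dist A 0 ^ 2 := by
      rw [← sq_abs (A a)]; exact pow_le_pow_left₀ (abs_nonneg _) this 2
    split <;> [exact h2; positivity]
  calc tnorm d s A ≤ Real.sqrt (∑ _a : ∀ i, Fin (d i), dist A 0 ^ 2) :=
        Real.sqrt_le_sqrt (Finset.sum_le_sum fun a _ => h1 a)
    _ = Real.sqrt (Fintype.card (∀ i, Fin (d i))) * dist A 0 := by
        rw [Finset.sum_const, Finset.card_univ, nsmul_eq_mul, Real.sqrt_mul (by positivity),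
          Real.sqrt_sq dist_nonneg]

lemma tnorm_pos {s : Finset ι} {A : (∀ i, Fin (d i)) → ℝ} (hA : TensorDependsOn d s A)
    (h0 : A ≠ 0) : 0 < tnorm d s A := by
  rcases (tnorm_nonneg s A).lt_or_eq with h | h
  · exact h
  · exfalso; apply h0
    have := dist_le_tnorm hA
    rw [← h] at this
    exact dist_le_zero.mp this

omit [∀ i, NeZero (d i)] in
lemma tmul_add_left (s1 s2 s3 : Finset ι) (A A' B : (∀ i, Fin (d i)) → ℝ) :
    tmul d s1 s2 s3 (A + A') B = tmul d s1 s2 s3 A B + tmul d s1 s2 s3 A' B := by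
  funext a
  simp only [tmul, Pi.add_apply, ← Finset.sum_add_distrib]
  refine Finset.sum_congr rfl fun b _ => ?_
  split <;> ring

end Aux

section Key
variable {ι : Type*} [Fintype ι] [DecidableEq ι] {d : ι → ℕ}

lemma sum_ite_eq_pt {α : Type*} [Fintype α] {cond : α → Prop} [DecidablePred cond]
    (g : α → ℝ) (e₀ : α) (hc : ∀ e, cond e → e = e₀) :
    ∑ e, (if cond e then g e else 0) = if cond e₀ then g e₀ else 0 :=
  Fintype.sum_eq_single e₀ (fun e hne => if_neg fun h => hne (hc e h))

lemma ite_sum_mul {α : Type*} [Fintype α] (p : Prop) [Decidable p]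
    (q : α → Prop) [DecidablePred q] (g : α → ℝ) (x : ℝ) :
    (if p then (∑ f, if q f then g f else 0) * x else 0)
      = ∑ f, if p ∧ q f then g f * x else 0 := by
  by_cases hp : p
  · simp only [if_pos hp, hp, true_and, Finset.sum_mul]
    refine Finset.sum_congr rfl fun f _ => ?_
    split <;> simp
  · simp [hp]

lemma ite_mul_sum {α : Type*} [Fintype α] (p : Prop) [Decidable p]
    (q : α → Prop) [DecidablePred q] (g : α → ℝ) (x : ℝ) :
    (if p then x * (∑ f, if q f then g f else 0) else 0)
      = ∑ f, if p ∧ q f then x * g f else 0 := by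
  by_cases hp : p
  · simp only [if_pos hp, hp, true_and, Finset.mul_sum]
    refine Finset.sum_congr rfl fun f _ => ?_
    split <;> simp
  · simp [hp]

lemma key_identity (s1 s2 s3 s4 : Finset ι)
    (h3 : s3 ⊆ s1 ∪ s2) (h4 : s4 ∩ (s1 ∪ s2) = ∅)
    (h B Cbar : (∀ i, Fin (d i)) → ℝ)
    (hh : TensorDependsOn d s1 h) (hB : TensorDependsOn d s2 B)
    (hCbar : TensorDependsOn d (s4 ∪ s3) Cbar) :
    tmul d (s4 ∪ s1) s1 s4 (tmul d (s4 ∪ s3) s2 (s4 ∪ s1) Cbar B) h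
      = tmul d (s4 ∪ s3) s3 s4 Cbar (tmul d s1 s2 s3 h B) := by
  have hd : ∀ i ∈ s4, i ∉ s1 ∪ s2 := fun i hi hmem =>
    (Finset.eq_empty_iff_forall_notMem.mp h4 i) (Finset.mem_inter.2 ⟨hi, hmem⟩)
  funext a
  simp only [tmul]
  have hLHS : (∑ e : ∀ i, Fin (d i),
      if (∀ i, i ∉ ((s4 ∪ s1) ∪ s1) \ s4 → e i = a i) then
        (∑ f : ∀ i, Fin (d i),
          if (∀ i, i ∉ ((s4 ∪ s3) ∪ s2) \ (s4 ∪ s1) → f i = e i) then Cbar f * B f else 0) * h e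
      else 0)
      = ∑ f : ∀ i, Fin (d i), if (∀ i, i ∉ s1 ∪ s2 → f i = a i) then
          Cbar f * B f * h (fun j => if j ∈ s1 then f j else a j) else 0 := by
    rw [Finset.sum_congr rfl fun e (_ : e ∈ Finset.univ) => ite_sum_mul _ _ _ _, Finset.sum_comm]
    refine Finset.sum_congr rfl fun f _ => ?_
    rw [sum_ite_eq_pt _ (fun j => if j ∈ s1 then f j else a j) ?_]
    · refine if_congr ?_ rfl rfl
      constructor
      · rintro ⟨hP, hQ⟩ i hi
        have hi1 : i ∉ s1 := fun h1 => hi (Finset.mem_union_left _ h1)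
        have hfe := hQ i (by
          simp only [Finset.mem_sdiff, Finset.mem_union, not_and, not_not]
          rintro ((h4' | h3') | h2')
          · exact Or.inl h4'
          · exact absurd (h3 h3') hi
          · exact absurd (Finset.mem_union_right _ h2') hi)
        rw [hfe]
        simp [hi1]
      · intro hRf
        constructor
        · intro i hi
          by_cases hi1 : i ∈ s1
          · exfalso
            apply hi
            simp only [Finset.mem_sdiff, Finset.mem_union]
            exact ⟨Or.inl (Or.inr hi1), fun h4' => hd i h4' (Finset.mem_union_left _ hi1)⟩
          · simp [hi1]
        · intro i hi
          by_cases hi1 : i ∈ s1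
          · simp [hi1]
          · simp only [if_neg hi1]
            simp only [Finset.mem_sdiff, Finset.mem_union, not_and, not_not] at hi
            by_cases hi4 : i ∈ s4
            · exact hRf i (hd i hi4)
            · by_cases h3' : i ∈ s3
              · rcases hi (Or.inl (Or.inr h3')) with h4' | h1'
                · exact absurd h4' hi4
                · exact absurd h1' hi1
              · by_cases h2' : i ∈ s2
                · rcases hi (Or.inr h2') with h4' | h1'
                  · exact absurd h4' hi4
                  · exact absurd h1' hi1
                · exact hRf i (by simp [Finset.mem_union, hi1, h2'])
    · rintro e ⟨hP, hQ⟩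
      funext i
      by_cases hi1 : i ∈ s1
      · have hfe := hQ i (by
          simp only [Finset.mem_sdiff, Finset.mem_union, not_and, not_not]
          exact fun _ => Or.inr hi1)
        rw [if_pos hi1]
        exact hfe.symm
      · have hea := hP i (by
          simp only [Finset.mem_sdiff, Finset.mem_union, not_and, not_not]
          rintro ((h4' | h1') | h1')
          · exact h4'
          · exact absurd h1' hi1
          · exact absurd h1' hi1)
        rw [if_neg hi1]
        exact hea
  have hRHS : (∑ b : ∀ i, Fin (d i),
      if (∀ i, i ∉ ((s4 ∪ s3) ∪ s3) \ s4 → b i = a i) then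
        Cbar b * (∑ c : ∀ i, Fin (d i),
          if (∀ i, i ∉ (s1 ∪ s2) \ s3 → c i = b i) then h c * B c else 0)
      else 0)
      = ∑ c : ∀ i, Fin (d i), if (∀ i, i ∉ s1 ∪ s2 → c i = a i) then
          Cbar (fun j => if j ∈ s3 then c j else a j) * (h c * B c) else 0 := by
    rw [Finset.sum_congr rfl fun b (_ : b ∈ Finset.univ) => ite_mul_sum _ _ _ _, Finset.sum_comm]
    refine Finset.sum_congr rfl fun c _ => ?_
    rw [sum_ite_eq_pt _ (fun j => if j ∈ s3 then c j else a j) ?_]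
    · refine if_congr ?_ rfl rfl
      constructor
      · rintro ⟨hP, hQ⟩ i hi
        have hi3 : i ∉ s3 := fun h3' => hi (h3 h3')
        have hcb := hQ i (by
          simp only [Finset.mem_sdiff, Finset.mem_union, not_and, not_not]
          rintro (h1' | h2')
          · exact absurd (Finset.mem_union_left _ h1') hi
          · exact absurd (Finset.mem_union_right _ h2') hi)
        rw [hcb]
        simp [hi3]
      · intro hRc
        constructor
        · intro i hi
          by_cases hi3 : i ∈ s3
          · exfalso
            apply hi
            simp only [Finset.mem_sdiff, Finset.mem_union]
            exact ⟨Or.inl (Or.inr hi3), fun h4' => hd i h4' (h3 hi3)⟩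
          · simp [hi3]
        · intro i hi
          by_cases hi3 : i ∈ s3
          · simp [hi3]
          · simp only [if_neg hi3]
            simp only [Finset.mem_sdiff, Finset.mem_union, not_and, not_not] at hi
            by_cases h1' : i ∈ s1
            · exact absurd (hi (Or.inl h1')) hi3
            · by_cases h2' : i ∈ s2
              · exact absurd (hi (Or.inr h2')) hi3
              · exact hRc i (by simp [Finset.mem_union, h1', h2'])
    · rintro b ⟨hP, hQ⟩
      funext i
      by_cases hi3 : i ∈ s3
      · have hcb := hQ i (by
          simp only [Finset.mem_sdiff, Finset.mem_union, not_and, not_not]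
          exact fun _ => hi3)
        rw [if_pos hi3]
        exact hcb.symm
      · have hba := hP i (by
          simp only [Finset.mem_sdiff, Finset.mem_union, not_and, not_not]
          rintro ((h4' | h3') | h3')
          · exact h4'
          · exact absurd h3' hi3
          · exact absurd h3' hi3)
        rw [if_neg hi3]
        exact hba
  rw [hLHS, hRHS]
  refine Finset.sum_congr rfl fun c _ => ?_
  by_cases hRc : ∀ i, i ∉ s1 ∪ s2 → c i = a i
  · rw [if_pos hRc, if_pos hRc]
    have h1 : h (fun j => if j ∈ s1 then c j else a j) = h c :=
      hh _ _ fun i hi => by simp [hi]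
    have h2 : Cbar (fun j => if j ∈ s3 then c j else a j) = Cbar c := by
      refine hCbar _ _ fun i hi => ?_
      rcases Finset.mem_union.mp hi with h4' | h3'
      · rw [if_neg fun h3'' => hd i h4' (h3 h3'')]
        exact (hRc i (hd i h4')).symm
      · rw [if_pos h3']
    rw [h1, h2]
    ring
  · rw [if_neg hRc, if_neg hRc]
end Key

section More
variable {ι : Type*} [Fintype ι] [DecidableEq ι] {d : ι → ℕ} [∀ i, NeZero (d i)]

omit [∀ i, NeZero (d i)] in
lemma tmul_dependsOn {s1 s2 : Finset ι} (s3 : Finset ι) {A B : (∀ i, Fin (d i)) → ℝ}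
    (hA : TensorDependsOn d s1 A) (hB : TensorDependsOn d s2 B) :
    TensorDependsOn d s3 (tmul d s1 s2 s3 A B) := by
  intro a a' hagree
  simp only [tmul]
  set σ : (∀ i, Fin (d i)) → (∀ i, Fin (d i)) :=
    fun b i => if i ∈ s1 ∪ s2 then b i else Equiv.swap (a i) (a' i) (b i) with hσ
  have hinv : Function.Involutive σ := by
    intro b; funext i
    simp only [hσ]
    by_cases hi : i ∈ s1 ∪ s2
    · rw [if_pos hi, if_pos hi]
    · rw [if_neg hi, if_neg hi, Equiv.swap_apply_self]
  refine Fintype.sum_bijective σ hinv.bijective _ _ fun b => ?_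
  have hA' : A b = A (σ b) :=
    hA _ _ fun i hi => by
      simp only [hσ]; rw [if_pos (Finset.mem_union_left _ hi)]
  have hB' : B b = B (σ b) :=
    hB _ _ fun i hi => by
      simp only [hσ]; rw [if_pos (Finset.mem_union_right _ hi)]
  have hcond : (∀ i, i ∉ (s1 ∪ s2) \ s3 → b i = a i)
      ↔ (∀ i, i ∉ (s1 ∪ s2) \ s3 → σ b i = a' i) := by
    refine forall_congr' fun i => imp_congr_right fun hi => ?_
    by_cases h12 : i ∈ s1 ∪ s2
    · have hi3 : i ∈ s3 := by
        by_contra h3'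
        exact hi (Finset.mem_sdiff.2 ⟨h12, h3'⟩)
      simp only [hσ, if_pos h12]
      rw [hagree i hi3]
    · simp only [hσ, if_neg h12]
      constructor
      · intro hba; rw [hba]; exact Equiv.swap_apply_left _ _
      · intro hsw
        have := Equiv.swap_apply_left (a i) (a' i)
        exact (Equiv.swap (a i) (a' i)).injective (hsw.trans this.symm)
  rw [if_congr hcond (by rw [hA', hB']) rfl]

lemma abs_tmul_le (s1 s2 s3 : Finset ι) {A : (∀ i, Fin (d i)) → ℝ}
    (B : (∀ i, Fin (d i)) → ℝ) (hA : TensorDependsOn d s1 A) (a : ∀ i, Fin (d i)) :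
    |tmul d s1 s2 s3 A B a| ≤ (∑ c : ∀ i, Fin (d i), |B c|) * tnorm d s1 A := by
  simp only [tmul]
  calc |∑ b : ∀ i, Fin (d i), if (∀ i, i ∉ (s1 ∪ s2) \ s3 → b i = a i) then A b * B b else 0|
      ≤ ∑ b : ∀ i, Fin (d i), |if (∀ i, i ∉ (s1 ∪ s2) \ s3 → b i = a i) then A b * B b else 0| :=
        Finset.abs_sum_le_sum_abs _ _
    _ ≤ ∑ b : ∀ i, Fin (d i), tnorm d s1 A * |B b| := by
        refine Finset.sum_le_sum fun b _ => ?_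
        split
        · rw [abs_mul]
          exact mul_le_mul_of_nonneg_right (abs_le_tnorm hA b) (abs_nonneg _)
        · rw [abs_zero]
          exact mul_nonneg (tnorm_nonneg _ _) (abs_nonneg _)
    _ = (∑ c : ∀ i, Fin (d i), |B c|) * tnorm d s1 A := by
        rw [← Finset.mul_sum, mul_comm]

lemma dist_tmul_le (s1 s2 s3 : Finset ι) {A : (∀ i, Fin (d i)) → ℝ}
    (B : (∀ i, Fin (d i)) → ℝ) (hA : TensorDependsOn d s1 A) :
    dist (tmul d s1 s2 s3 A B) 0 ≤ (∑ c : ∀ i, Fin (d i), |B c|) * tnorm d s1 A := by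
  rw [dist_pi_le_iff (mul_nonneg (Finset.sum_nonneg fun c _ => abs_nonneg _) (tnorm_nonneg _ _))]
  intro x
  simpa [Real.dist_eq] using abs_tmul_le s1 s2 s3 B hA x
end More

section Final
variable {ι : Type*} [Fintype ι] [DecidableEq ι] {d : ι → ℕ} [∀ i, NeZero (d i)]

omit [∀ i, NeZero (d i)] in
lemma tmul_zero_right (sa sb sc : Finset ι) (A : (∀ i, Fin (d i)) → ℝ) :
    tmul d sa sb sc A 0 = 0 := by
  funext x
  simp [tmul]

lemma tnorm_zero (s : Finset ι) : tnorm d s (0 : (∀ i, Fin (d i)) → ℝ) = 0 := by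
  simp [tnorm]
end Final

/-- Pullback through a multiplication node, left argument (Theorem 4, second part):
let `B` be a fixed tensor with index set `s2`, and let `Y` map tensors with index set `s3`
to tensors with index set `s4` (with `s4` disjoint from `s1 ∪ s2`), having derivative
tensor `Cbar` at the point `C = A *_(s1, s2, s3) B`. Then `A ↦ Y(A *_(s1, s2, s3) B)`
has derivative tensor `Cbar *_(s4s3, s2, s4s1) B` at `A`. -/
theorem pullback_mul_left {ι : Type*} [Fintype ι] [DecidableEq ι] (d : ι → ℕ)
    [∀ i, NeZero (d i)] (s1 s2 s3 s4 : Finset ι)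
    (h3 : s3 ⊆ s1 ∪ s2) (h4 : s4 ∩ (s1 ∪ s2) = ∅)
    (A B Cbar : (∀ i, Fin (d i)) → ℝ)
    (Y : ((∀ i, Fin (d i)) → ℝ) → ((∀ i, Fin (d i)) → ℝ))
    (hA : TensorDependsOn d s1 A) (hB : TensorDependsOn d s2 B)
    (hY : ∀ z, TensorDependsOn d s4 (Y z))
    (hCbar : TensorDependsOn d (s4 ∪ s3) Cbar)
    (hdY : HasDerivTensor d s3 s4 Y (tmul d s1 s2 s3 A B) Cbar) :
    HasDerivTensor d s1 s4 (fun A' => Y (tmul d s1 s2 s3 A' B)) A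
      (tmul d (s4 ∪ s3) s2 (s4 ∪ s1) Cbar B) := by
  classical
  rw [HasDerivTensor, Metric.tendsto_nhdsWithin_nhds] at hdY ⊢
  set M : ℝ := ∑ c : ∀ i, Fin (d i), |B c| with hM
  set SN : ℝ := Real.sqrt (Fintype.card (∀ i, Fin (d i))) with hSN
  have hM0 : 0 ≤ M := Finset.sum_nonneg fun c _ => abs_nonneg _
  have hSN0 : 0 ≤ SN := Real.sqrt_nonneg _
  set K : ℝ := SN * M with hK
  have hK0 : 0 ≤ K := mul_nonneg hSN0 hM0
  intro ε hε
  obtain ⟨δ₁, hδ₁, hq⟩ := hdY (ε / (K + 1)) (by positivity)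
  refine ⟨δ₁ / (K + 1), by positivity, ?_⟩
  rintro h ⟨hh1, hh2⟩ hdist
  have htn1 : 0 < tnorm d s1 h := tnorm_pos hh1 hh2
  rw [tmul_add_left, key_identity s1 s2 s3 s4 h3 h4 h B Cbar hh1 hB hCbar]
  set φh : (∀ i, Fin (d i)) → ℝ := tmul d s1 s2 s3 h B with hφh
  set C : (∀ i, Fin (d i)) → ℝ := tmul d s1 s2 s3 A B with hC
  by_cases hφ0 : φh = 0
  · rw [hφ0, tmul_zero_right, add_zero]
    simp only [sub_self, sub_zero, zero_sub]
    rw [Real.dist_eq, sub_zero]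
    rw [tnorm_zero, zero_div, abs_zero]
    exact hε
  · have hφd : TensorDependsOn d s3 φh := tmul_dependsOn s3 hh1 hB
    have htn3 : 0 < tnorm d s3 φh := tnorm_pos hφd hφ0
    have hd0 : 0 ≤ dist h 0 := dist_nonneg
    have hdφ : dist φh 0 ≤ M * tnorm d s1 h := dist_tmul_le s1 s2 s3 B hh1
    have htns : tnorm d s1 h ≤ SN * dist h 0 := tnorm_le_sqrt_card_mul s1 h
    have hdistφ : dist φh 0 < δ₁ := by
      have h1 : dist φh 0 ≤ K * dist h 0 := by
        calc dist φh 0 ≤ M * tnorm d s1 h := hdφ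
          _ ≤ M * (SN * dist h 0) := mul_le_mul_of_nonneg_left htns hM0
          _ = K * dist h 0 := by ring
      have hcancel : δ₁ / (K + 1) * (K + 1) = δ₁ := div_mul_cancel₀ _ (by positivity)
      nlinarith [mul_lt_mul_of_pos_right hdist (show (0:ℝ) < K + 1 by positivity)]
    have hq' := hq ⟨hφd, hφ0⟩ hdistφ
    rw [Real.dist_eq, sub_zero,
      abs_of_nonneg (div_nonneg (tnorm_nonneg _ _) htn3.le)] at hq'
    rw [Real.dist_eq, sub_zero,
      abs_of_nonneg (div_nonneg (tnorm_nonneg _ _) htn1.le)]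
    have hbound : tnorm d s3 φh ≤ K * tnorm d s1 h := by
      calc tnorm d s3 φh ≤ SN * dist φh 0 := tnorm_le_sqrt_card_mul s3 φh
        _ ≤ SN * (M * tnorm d s1 h) := mul_le_mul_of_nonneg_left hdφ hSN0
        _ = K * tnorm d s1 h := by ring
    set N4 : ℝ := tnorm d s4 (Y (C + φh) - Y C - tmul d (s4 ∪ s3) s3 s4 Cbar φh) with hN4
    have hN40 : 0 ≤ N4 := tnorm_nonneg _ _
    rw [div_lt_iff₀ htn1]
    have hstep : N4 < ε / (K + 1) * tnorm d s3 φh := (div_lt_iff₀ htn3).mp hq'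
    have he1 : ε / (K + 1) * (K + 1) = ε := div_mul_cancel₀ _ (by positivity)
    have he1p : 0 < ε / (K + 1) := by positivity
    nlinarith [mul_le_mul_of_nonneg_left hbound he1p.le, mul_pos he1p htn1]
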